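/- Let E be a measurable space, let G be a finite group acting measurably on E, and let Z be a random element of E such that g·Z has the same distribution as Z for every g ∈ G. Let S : E → ℝ be measurable and assume that almost surely the values (S(g·Z))_{g ∈ G} are pairwise distinct. Define the randomization p-value p(Z) = (1/|G|) · |{ g ∈ G : S(g·Z) ≥ S(Z) }|. Then for every α ∈ (0,1), P( p(Z) > α ) = ⌈(1−α)|G|⌉ / |G|; in particular, 1 − α ≤ P( p(Z) > α ) ≤ 1 − α + 1/|G|. -/

import Mathlib

/-!
Write `R z = #{g | S z ≤ S (g • z)}`. Reindexing by `g ↦ g * h` shows that `R (h • z)` is the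
rank from the top of `S (h • z)` among the orbit scores `S (g • z)`; when these are distinct,
`h ↦ R (h • z)` is a bijection from `G` onto `{1, …, |G|}`, so exactly `|G| - ⌊α |G|⌋` elements
`h` have `R (h • z) > α |G|`. By invariance all events `{R (h • Z) > α |G|}` have the probability
of `{R Z > α |G|}`; summing over `h` gives `|G|` times that probability as the expected count
`|G| - ⌊α |G|⌋ = ⌈(1 - α) |G|⌉`.
-/

open MeasureTheory Finset

section Rank

variable {ι β : Type*} [Fintype ι] [LinearOrder β]

def upperRank (f : ι → β) (i : ι) : ℕ := #{j | f i ≤ f j}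

variable {f : ι → β}

theorem upperRank_lt_upperRank {i i' : ι} (h : f i < f i') :
    upperRank f i' < upperRank f i := by
  classical
  refine card_lt_card ⟨fun j hj => ?_, fun hsub => ?_⟩
  · simp only [mem_filter, mem_univ, true_and] at hj ⊢
    exact h.le.trans hj
  · simpa using (mem_filter.1 (hsub (by simp : i ∈ univ.filter fun j => f i ≤ f j))).2.trans_lt h

theorem upperRank_injective (hf : Function.Injective f) : Function.Injective (upperRank f) := by
  intro i i' he
  rcases lt_trichotomy (f i) (f i') with hlt | heq | hlt
  · exact absurd he (upperRank_lt_upperRank hlt).ne'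
  · exact hf heq
  · exact absurd he (upperRank_lt_upperRank hlt).ne

theorem upperRank_mem_Icc (i : ι) : upperRank f i ∈ Icc 1 (Fintype.card ι) :=
  mem_Icc.2 ⟨card_pos.2 ⟨i, by simp⟩, card_filter_le _ _⟩

theorem image_upperRank (hf : Function.Injective f) :
    univ.image (upperRank f) = Icc 1 (Fintype.card ι) :=
  eq_of_subset_of_card_le (fun _ hm => by
      obtain ⟨i, -, rfl⟩ := mem_image.1 hm
      exact upperRank_mem_Icc i)
    (by rw [card_image_of_injective _ (upperRank_injective hf), Nat.card_Icc, card_univ]; rfl)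

theorem card_filter_upperRank (hf : Function.Injective f) (p : ℕ → Prop) [DecidablePred p] :
    #{i | p (upperRank f i)} = #{m ∈ Icc 1 (Fintype.card ι) | p m} := by
  rw [← image_upperRank hf, filter_image, card_image_of_injective _ (upperRank_injective hf)]

end Rank

section Orbit

variable {G E β : Type*} [Group G] [Fintype G] [MulAction G E] [LinearOrder β]

def orbitRank (S : E → β) (z : E) : ℕ := #{g : G | S z ≤ S (g • z)}

theorem orbitRank_smul (S : E → β) (h : G) (z : E) :
    orbitRank (G := G) S (h • z) = upperRank (fun g : G => S (g • z)) h :=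
  card_equiv (Equiv.mulRight h) (by simp [mul_smul])

end Orbit

theorem sum_measureReal_eq_integral_card {Ω ι : Type*} [MeasurableSpace Ω] [Fintype ι]
    (μ : Measure Ω) [IsFiniteMeasure μ] {s : ι → Set Ω} [∀ i, DecidablePred (· ∈ s i)]
    (hs : ∀ i, MeasurableSet (s i)) :
    ∑ i, μ.real (s i) = ∫ ω, (#{i | ω ∈ s i} : ℝ) ∂μ := by
  simp_rw [← integral_indicator_one (hs _)]
  rw [← integral_finsetSum _ fun i _ => (integrable_const 1).indicator (hs i)]
  congr 1 with ω
  simp [Set.indicator_apply, Finset.sum_boole]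

section Invariance

variable {E G Ω : Type*} [MeasurableSpace E] [Group G] [Fintype G] [MulAction G E]
  [MeasurableSpace Ω] {P : Measure Ω} {Z : Ω → E}

theorem measurable_orbitRank {β : Type*} [LinearOrder β] [TopologicalSpace β]
    [MeasurableSpace β] [OpensMeasurableSpace β] [OrderClosedTopology β]
    [SecondCountableTopology β] (hact : ∀ g : G, Measurable fun z : E => g • z) {S : E → β}
    (hS : Measurable S) : Measurable (orbitRank (G := G) S) := by
  have : orbitRank (G := G) S = fun z => ∑ g : G, if S z ≤ S (g • z) then 1 else 0 := by
    funext z; exact card_filter _ _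
  rw [this]
  exact Finset.measurable_sum _ fun g _ =>
    Measurable.ite (measurableSet_le hS (hS.comp (hact g))) measurable_const measurable_const

theorem card_mul_measureReal_preimage_eq [IsProbabilityMeasure P]
    (hact : ∀ g : G, Measurable fun z : E => g • z) (hZ : Measurable Z)
    (hinv : ∀ g : G, P.map (fun ω => g • Z ω) = P.map Z)
    {A : Set E} [DecidablePred (· ∈ A)] (hA : MeasurableSet A) {c : ℕ}
    (hc : ∀ᵐ ω ∂P, #{g : G | g • Z ω ∈ A} = c) :
    Fintype.card G * P.real (Z ⁻¹' A) = c := by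
  have hmeas (g : G) : Measurable fun ω => g • Z ω := (hact g).comp hZ
  have hsame (g : G) : P.real ((fun ω => g • Z ω) ⁻¹' A) = P.real (Z ⁻¹' A) := by
    rw [← map_measureReal_apply (hmeas g) hA, hinv g, map_measureReal_apply hZ hA]
  -- a transparent `let`, so that this instance unfolds to the one used in `hc`
  let (g : G) : DecidablePred (· ∈ (fun ω => g • Z ω) ⁻¹' A) := fun ω =>
    inferInstanceAs (Decidable (g • Z ω ∈ A))
  calc Fintype.card G * P.real (Z ⁻¹' A)
      = ∑ g : G, P.real ((fun ω => g • Z ω) ⁻¹' A) := by simp [hsame]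
    _ = ∫ ω, (#{g : G | g • Z ω ∈ A} : ℝ) ∂P :=
        sum_measureReal_eq_integral_card P fun g => hmeas g hA
    _ = c := by
        rw [integral_congr_ae (hc.mono fun ω hω => congrArg (Nat.cast : ℕ → ℝ) hω)]
        simp

end Invariance

theorem card_filter_Icc_one_lt (m n : ℕ) : #{k ∈ Icc 1 n | m < k} = n - m := by
  have : {k ∈ Icc 1 n | m < k} = Icc (m + 1) n := by
    ext; simp only [mem_filter, mem_Icc]; omega
  rw [this, Nat.card_Icc]
  omega

theorem natCast_sub_floor_eq_ceil {x : ℝ} {n : ℕ} (hx₀ : 0 ≤ x) (hxn : x ≤ n) :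
    ((n - ⌊x⌋₊ : ℕ) : ℤ) = ⌈n - x⌉ := by
  have hle : ⌊x⌋₊ ≤ n := Nat.floor_le_of_le hxn
  rw [sub_eq_neg_add, Int.ceil_add_natCast, Int.ceil_neg, ← Int.natCast_floor_eq_floor hx₀]
  omega

theorem ceil_mul_div_mem_Icc (x : ℝ) {n : ℝ} (hn : 0 < n) :
    ⌈x * n⌉ / n ∈ Set.Icc x (x + 1 / n) := by
  constructor
  · rw [le_div_iff₀ hn]; exact Int.le_ceil _
  · rw [div_le_iff₀ hn, add_mul, one_div_mul_cancel hn.ne']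
    exact (Int.ceil_lt_add_one _).le

/-- **Validity of the randomization p-value.**  For a finite group `G` acting measurably on
`E`, a random element `Z` whose law is invariant under the action, and a measurable score
`S` whose values over the orbit of `Z` are a.s. pairwise distinct, the p-value
`p(Z) = (1/|G|) |{g : S(g•Z) ≥ S(Z)}|` satisfies
`P(p(Z) > α) = ⌈(1−α)|G|⌉ / |G|`, and in particular
`1 − α ≤ P(p(Z) > α) ≤ 1 − α + 1/|G|`. -/
theorem randomization_pvalue_valid
    {E : Type*} [MeasurableSpace E] {G : Type*} [Group G] [Fintype G] [MulAction G E]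
    (hact : ∀ g : G, Measurable fun z : E => g • z)
    {Ω : Type*} [MeasurableSpace Ω] (P : Measure Ω) [IsProbabilityMeasure P]
    (Z : Ω → E) (hZ : Measurable Z)
    (hinv : ∀ g : G, Measure.map (fun ω => g • Z ω) P = Measure.map Z P)
    (S : E → ℝ) (hS : Measurable S)
    (hdist : ∀ᵐ ω ∂P, ∀ g g' : G, S (g • Z ω) = S (g' • Z ω) → g = g')
    (α : ℝ) (hα : α ∈ Set.Ioo (0 : ℝ) 1) :
    (P {ω | α < ((Finset.univ.filter fun g : G => S (Z ω) ≤ S (g • Z ω)).card : ℝ) /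
        (Fintype.card G : ℝ)}).toReal =
      (⌈(1 - α) * (Fintype.card G : ℝ)⌉ : ℝ) / (Fintype.card G : ℝ) ∧
    1 - α ≤ (P {ω | α < ((Finset.univ.filter fun g : G => S (Z ω) ≤ S (g • Z ω)).card : ℝ) /
        (Fintype.card G : ℝ)}).toReal ∧
    (P {ω | α < ((Finset.univ.filter fun g : G => S (Z ω) ≤ S (g • Z ω)).card : ℝ) /
        (Fintype.card G : ℝ)}).toReal ≤ 1 - α + 1 / (Fintype.card G : ℝ) := by
  obtain ⟨hα₀, hα₁⟩ := hα
  set N := Fintype.card G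
  have hN : (0 : ℝ) < N := Nat.cast_pos.2 Fintype.card_pos
  set A := {z : E | ⌊α * N⌋₊ < orbitRank (G := G) S z}
  have hevent : {ω | α < (#{g : G | S (Z ω) ≤ S (g • Z ω)} : ℝ) / N} = Z ⁻¹' A := by
    ext ω
    rw [Set.mem_ofPred_eq, lt_div_iff₀ hN, ← Nat.floor_lt (by positivity)]
    rfl
  have hcount : ∀ᵐ ω ∂P, #{g : G | g • Z ω ∈ A} = N - ⌊α * N⌋₊ := by
    filter_upwards [hdist] with ω hω
    simp_rw [A, Set.mem_ofPred_eq, orbitRank_smul]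
    rw [card_filter_upperRank (fun g g' => hω g g'), card_filter_Icc_one_lt]
  have hA : MeasurableSet A := measurableSet_lt measurable_const (measurable_orbitRank hact hS)
  have hprob : P.real (Z ⁻¹' A) = ⌈(1 - α) * N⌉ / N := by
    rw [eq_div_iff hN.ne', mul_comm, card_mul_measureReal_preimage_eq hact hZ hinv hA hcount,
      sub_mul, one_mul, ← natCast_sub_floor_eq_ceil (by positivity) (by nlinarith)]
    norm_cast
  rw [← measureReal_def, hevent, hprob]
  exact ⟨rfl, ceil_mul_div_mem_Icc _ hN⟩
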